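/- Let d ≥ 1, let Σ be a positive semidefinite d×d real matrix, let θ₀ ∈ ℝ^d, σ ≥ 0, and ε ≥ 0. Then the function θ ↦ R_L(θ,ε) := ‖θ−θ₀‖²_Σ + σ² + ε²‖θ‖₂² + 2ε√(2/π)·‖θ‖₂·√(‖θ−θ₀‖²_Σ + σ²) is convex on ℝ^d. -/

import Mathlib

open MeasureTheory ProbabilityTheory Real Filter Matrix
open scoped RealInnerProductSpace BigOperators NNReal ENNReal Topology

noncomputable section

/-- The Σ-quadratic form `aᵀ Σ a`. -/
def quadForm {d : ℕ} (S : Matrix (Fin d) (Fin d) ℝ) (a : EuclideanSpace ℝ (Fin d)) : ℝ :=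
  ∑ i, ∑ j, a i * S i j * a j

/-- The population adversarial risk of the linear model `f_θ(x) = θᵀx` under squared loss
and `L2` attacks of strength `ε`, for `x ~ N(0,Σ)` and `y = θ₀ᵀx + w`, `w ~ N(0,σ²)`:
`R_L(θ,ε) = ‖θ−θ₀‖²_Σ + σ² + ε²‖θ‖₂² + 2ε√(2/π)‖θ‖₂√(‖θ−θ₀‖²_Σ + σ²)`. -/
def RL {d : ℕ} (S : Matrix (Fin d) (Fin d) ℝ) (θ0 : EuclideanSpace ℝ (Fin d))
    (σ ε : ℝ) (θ : EuclideanSpace ℝ (Fin d)) : ℝ :=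
  quadForm S (θ - θ0) + σ ^ 2 + ε ^ 2 * ‖θ‖ ^ 2 +
    2 * ε * Real.sqrt (2 / Real.pi) * ‖θ‖ * Real.sqrt (quadForm S (θ - θ0) + σ ^ 2)

/-!
Factor `Σ = Bᴴ B`, so that `√(‖θ - θ₀‖²_Σ + σ²)` is the Euclidean norm of the affine map
`θ ↦ (B (θ - θ₀), σ)` and hence convex; call it `f`, and put `g θ = ε ‖θ‖`. Since `β = √(2/π) ≤ 1`,
`R_L = f² + g² + 2β f g = (1 - β)(f² + g²) + β (f + g)²` is a nonnegative combination of squares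
of nonnegative convex functions.
-/

theorem quadForm_eq_dotProduct_mulVec {d : ℕ} (S : Matrix (Fin d) (Fin d) ℝ)
    (a : EuclideanSpace ℝ (Fin d)) : quadForm S a = a.ofLp ⬝ᵥ S *ᵥ a.ofLp := by
  simp only [quadForm, dotProduct, mulVec, Finset.mul_sum, mul_assoc]

theorem quadForm_nonneg {d : ℕ} {S : Matrix (Fin d) (Fin d) ℝ} (hS : S.PosSemidef)
    (a : EuclideanSpace ℝ (Fin d)) : 0 ≤ quadForm S a := by
  simpa [quadForm_eq_dotProduct_mulVec] using hS.dotProduct_mulVec_nonneg a.ofLp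

theorem quadForm_conjTranspose_mul_self {m d : ℕ} (B : Matrix (Fin m) (Fin d) ℝ)
    (a : EuclideanSpace ℝ (Fin d)) :
    quadForm (Bᴴ * B) a = ‖toEuclideanLin B a‖ ^ 2 := by
  rw [quadForm_eq_dotProduct_mulVec, ← mulVec_mulVec, dotProduct_mulVec, vecMul_conjTranspose,
    star_trivial, EuclideanSpace.real_norm_sq_eq]
  simp [dotProduct, sq]

open scoped ComplexOrder in
theorem Matrix.PosSemidef.exists_eq_conjTranspose_mul_self {n 𝕜 : Type*} [Fintype n]
    [DecidableEq n] [RCLike 𝕜] {A : Matrix n n 𝕜} (hA : A.PosSemidef) :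
    ∃ B : Matrix n n 𝕜, A = Bᴴ * B := by
  open MatrixOrder Matrix.Norms.L2Operator in
  exact CStarAlgebra.nonneg_iff_eq_star_mul_self.mp hA.nonneg

theorem convexOn_sqrt_norm_sq_add_sq {F : Type*} [SeminormedAddCommGroup F] [NormedSpace ℝ F]
    (c : ℝ) : ConvexOn ℝ Set.univ (fun v : F => √(‖v‖ ^ 2 + c ^ 2)) := by
  let g : F →ᵃ[ℝ] WithLp 2 (F × ℝ) :=
    (WithLp.linearEquiv 2 ℝ (F × ℝ)).symm.toLinearMap.toAffineMap.comp
      ((LinearMap.inl ℝ F ℝ).toAffineMap + AffineMap.const ℝ F (0, c))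
  refine (convexOn_univ_norm.comp_affineMap g).congr fun v _ => ?_
  simp [g, WithLp.prod_norm_eq_of_L2]

theorem convexOn_sqrt_quadForm_sub_add_sq {d : ℕ} {S : Matrix (Fin d) (Fin d) ℝ}
    (hS : S.PosSemidef) (θ0 : EuclideanSpace ℝ (Fin d)) (c : ℝ) :
    ConvexOn ℝ Set.univ (fun θ => √(quadForm S (θ - θ0) + c ^ 2)) := by
  obtain ⟨B, rfl⟩ := hS.exists_eq_conjTranspose_mul_self
  let L := toEuclideanLin B
  refine ((convexOn_sqrt_norm_sq_add_sq c).comp_affineMap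
    (L.toAffineMap - AffineMap.const ℝ _ (L θ0))).congr fun θ _ => ?_
  rw [quadForm_conjTranspose_mul_self, map_sub]
  rfl

theorem ConvexOn.sq_add_sq_add_two_mul_mul {E : Type*} [AddCommGroup E] [Module ℝ E]
    {s : Set E} {f g : E → ℝ} {β : ℝ} (hf : ConvexOn ℝ s f) (hg : ConvexOn ℝ s g)
    (hf₀ : ∀ ⦃x⦄, x ∈ s → 0 ≤ f x) (hg₀ : ∀ ⦃x⦄, x ∈ s → 0 ≤ g x) (hβ₀ : 0 ≤ β) (hβ₁ : β ≤ 1) :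
    ConvexOn ℝ s (fun x => f x ^ 2 + g x ^ 2 + 2 * β * f x * g x) := by
  have hfg₀ : ∀ ⦃x⦄, x ∈ s → 0 ≤ (f + g) x := fun x hx => add_nonneg (hf₀ hx) (hg₀ hx)
  refine ((((hf.pow hf₀ 2).add (hg.pow hg₀ 2)).smul (sub_nonneg.2 hβ₁)).add
    (((hf.add hg).pow hfg₀ 2).smul hβ₀)).congr fun x _ => ?_
  simp only [Pi.add_apply, Pi.pow_apply, smul_eq_mul]
  ring

theorem sqrt_two_div_pi_le_one : √(2 / π) ≤ 1 :=
  Real.sqrt_le_one.mpr (div_le_one_of_le₀ two_le_pi pi_pos.le)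

theorem adversarial_risk_convex
    {d : ℕ} (S : Matrix (Fin d) (Fin d) ℝ) (hS : S.PosSemidef)
    (θ0 : EuclideanSpace ℝ (Fin d)) (σ ε : ℝ) (hε : 0 ≤ ε) :
    ConvexOn ℝ Set.univ (RL S θ0 σ ε) := by
  refine ((convexOn_sqrt_quadForm_sub_add_sq hS θ0 σ).sq_add_sq_add_two_mul_mul
    (convexOn_univ_norm.smul hε) (fun _ _ => Real.sqrt_nonneg _) (fun _ _ => by positivity)
    (Real.sqrt_nonneg _) sqrt_two_div_pi_le_one).congr fun θ _ => ?_
  have hsq := Real.sq_sqrt (add_nonneg (quadForm_nonneg hS (θ - θ0)) (sq_nonneg σ))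
  simp only [RL, smul_eq_mul]
  linear_combination hsq
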